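/- Let α be a set of reals > 1. Then: (4) if a ∈ P(α) and b ∈ T(α), then a + b ∈ T(α); (5) if a ∈ T(α) and b ∈ T(α), then (ab + 1)/(a + b) ∈ T(α). -/

import Mathlib

noncomputable section

/-- The homothetic copy of a plane figure `S` under `x ↦ r • x + v`. -/
def homothety (r : ℝ) (v : ℝ × ℝ) (S : Set (ℝ × ℝ)) : Set (ℝ × ℝ) :=
  (fun x : ℝ × ℝ => (r * x.1 + v.1, r * x.2 + v.2)) '' S

/-- `S` is tiled by homothetic copies of figures from the family `F`:
`S` is a union of finitely many homothetic copies of members of `F`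
whose interiors are pairwise disjoint. -/
def IsTiling (S : Set (ℝ × ℝ)) (F : Set (Set (ℝ × ℝ))) : Prop :=
  ∃ (n : ℕ) (r : Fin n → ℝ) (v : Fin n → ℝ × ℝ) (t : Fin n → Set (ℝ × ℝ)),
    (∀ i, t i ∈ F) ∧ (∀ i, 0 < r i) ∧
    S = ⋃ i, homothety (r i) (v i) (t i) ∧
    ∀ i j, i ≠ j →
      interior (homothety (r i) (v i) (t i)) ∩ interior (homothety (r j) (v j) (t j)) = ∅
/-- The standard trapezoid `t(a)`: unit height, horizontal bases `a+1` and `a-1`,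
base angles `45°`, midline `a`. -/
def stdTrap (a : ℝ) : Set (ℝ × ℝ) :=
  convexHull ℝ ({(0, 0), (a + 1, 0), (a, 1), (1, 1)} : Set (ℝ × ℝ))

/-- The standard parallelogram `p(a)`: unit height, horizontal bases of length `a`. -/
def stdPar (a : ℝ) : Set (ℝ × ℝ) :=
  convexHull ℝ ({(0, 0), (a, 0), (a + 1, 1), (1, 1)} : Set (ℝ × ℝ))
/-- `T(α)`: the set of `b > 1` such that `t(b)` is tiled by homothetic copies of the
trapezoids `t(a)`, `a ∈ α`. -/
def Tset (α : Set ℝ) : Set ℝ :=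
  {b | 1 < b ∧ IsTiling (stdTrap b) (stdTrap '' α)}

/-- `P(α)`: the set of `b > 0` such that `p(b)` is tiled by homothetic copies of the
trapezoids `t(a)`, `a ∈ α`. -/
def Pset (α : Set ℝ) : Set ℝ :=
  {b | 0 < b ∧ IsTiling (stdPar b) (stdTrap '' α)}

/-!
The trapezoid `t(a + b)` is cut by the line `x - y = a` into `p(a)` and a translate of `t(b)`;
the trapezoid `t(c)`, `c = (ab + 1)/(a + b)`, is cut by the horizontal line at height
`h = (b + 1)/(a + b)` into `t(a)` scaled by `h` and a copy of `t(b)` scaled by `1 - h`.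
Tilings of two pieces lying on opposite sides of a cut line (a level set of an open map)
combine into a tiling of their union, since their interiors are disjoint.
-/

open Set

def homothetyHomeomorph {r : ℝ} (hr : r ≠ 0) (v : ℝ × ℝ) : (ℝ × ℝ) ≃ₜ (ℝ × ℝ) :=
  (Homeomorph.smulOfNeZero r hr).trans (Homeomorph.addRight v)

lemma homothety_eq_image_homothetyHomeomorph {r : ℝ} (hr : r ≠ 0) (v : ℝ × ℝ)
    (S : Set (ℝ × ℝ)) : homothety r v S = homothetyHomeomorph hr v '' S :=
  rfl

lemma homothety_homothety (r s : ℝ) (v w : ℝ × ℝ) (S : Set (ℝ × ℝ)) :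
    homothety r v (homothety s w S) = homothety (r * s) (r • w + v) S := by
  simp only [homothety, image_image]
  congr! 2 with x <;>
    simp only [Prod.smul_fst, Prod.smul_snd, Prod.fst_add, Prod.snd_add, smul_eq_mul] <;> ring

lemma mem_homothety_iff {r : ℝ} (hr : r ≠ 0) (v : ℝ × ℝ) (S : Set (ℝ × ℝ)) (p : ℝ × ℝ) :
    p ∈ homothety r v S ↔ r⁻¹ • (p - v) ∈ S := by
  rw [homothety_eq_image_homothetyHomeomorph hr, ← Homeomorph.coe_toEquiv,
    Equiv.image_eq_preimage_symm]
  rfl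

section

variable {F : Set (Set (ℝ × ℝ))} {S S₁ S₂ : Set (ℝ × ℝ)}

lemma isTiling_iff_exists_fintype : IsTiling S F ↔
    ∃ (ι : Type) (_ : Fintype ι) (r : ι → ℝ) (v : ι → ℝ × ℝ) (t : ι → Set (ℝ × ℝ)),
      (∀ i, t i ∈ F) ∧ (∀ i, 0 < r i) ∧ S = ⋃ i, homothety (r i) (v i) (t i) ∧
      ∀ i j, i ≠ j →
        interior (homothety (r i) (v i) (t i)) ∩ interior (homothety (r j) (v j) (t j)) = ∅ := by
  constructor
  · rintro ⟨n, r, v, t, h⟩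
    exact ⟨Fin n, inferInstance, r, v, t, h⟩
  · rintro ⟨ι, _, r, v, t, hF, hr, hS, hdisj⟩
    let e := (Fintype.equivFin ι).symm
    refine ⟨_, r ∘ e, v ∘ e, t ∘ e, fun i => hF _, fun i => hr _, ?_, fun i j hij => ?_⟩
    · rw [hS, ← e.surjective.iUnion_comp]
      rfl
    · exact hdisj _ _ (e.injective.ne hij)

lemma IsTiling.homothetic (h : IsTiling S F) {r : ℝ} (hr : 0 < r) (v : ℝ × ℝ) :
    IsTiling (homothety r v S) F := by
  obtain ⟨n, r', v', t, hF, hr', rfl, hdisj⟩ := h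
  refine ⟨n, fun i => r * r' i, fun i => r • v' i + v, t, hF, fun i => mul_pos hr (hr' i),
    ?_, fun i j hij => ?_⟩
  · simp only [homothety_eq_image_homothetyHomeomorph hr.ne', image_iUnion]
    simp only [← homothety_eq_image_homothetyHomeomorph, homothety_homothety]
  · simp only [← homothety_homothety, homothety_eq_image_homothetyHomeomorph hr.ne',
      ← Homeomorph.image_interior, ← image_inter (Homeomorph.injective _), hdisj i j hij,
      image_empty]

lemma IsTiling.union (h₁ : IsTiling S₁ F) (h₂ : IsTiling S₂ F)
    (hd : interior S₁ ∩ interior S₂ = ∅) : IsTiling (S₁ ∪ S₂) F := by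
  obtain ⟨n, r₁, v₁, t₁, hF₁, hr₁, rfl, hdisj₁⟩ := h₁
  obtain ⟨m, r₂, v₂, t₂, hF₂, hr₂, rfl, hdisj₂⟩ := h₂
  rw [isTiling_iff_exists_fintype]
  refine ⟨Fin n ⊕ Fin m, inferInstance, Sum.elim r₁ r₂, Sum.elim v₁ v₂, Sum.elim t₁ t₂,
    ?_, ?_, ?_, ?_⟩
  · rintro (i | i)
    exacts [hF₁ i, hF₂ i]
  · rintro (i | i)
    exacts [hr₁ i, hr₂ i]
  · rw [iUnion_sum]
    rfl
  · have hsub₁ := fun i => interior_mono (subset_iUnion (fun i => homothety (r₁ i) (v₁ i) (t₁ i)) i)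
    have hsub₂ := fun i => interior_mono (subset_iUnion (fun i => homothety (r₂ i) (v₂ i) (t₂ i)) i)
    rintro (i | i) (j | j) hij
    · exact hdisj₁ i j (fun h => hij (congrArg _ h))
    · exact subset_empty_iff.1 (hd ▸ inter_subset_inter (hsub₁ i) (hsub₂ j))
    · rw [inter_comm]
      exact subset_empty_iff.1 (hd ▸ inter_subset_inter (hsub₁ j) (hsub₂ i))
    · exact hdisj₂ i j (fun h => hij (congrArg _ h))

end

lemma interior_inter_interior_eq_empty_of_separated {X : Type*} [TopologicalSpace X]
    {f : X → ℝ} (hf : Continuous f) (hfo : IsOpenMap f) {S T : Set X} {c : ℝ}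
    (hS : S ⊆ f ⁻¹' Iic c) (hT : T ⊆ f ⁻¹' Ici c) : interior S ∩ interior T = ∅ := by
  have hS' : interior S ⊆ f ⁻¹' Iio c := by
    rw [← interior_Iic, hfo.preimage_interior_eq_interior_preimage hf]
    exact interior_mono hS
  have hT' : interior T ⊆ f ⁻¹' Ioi c := by
    rw [← interior_Ici, hfo.preimage_interior_eq_interior_preimage hf]
    exact interior_mono hT
  exact eq_empty_of_forall_notMem fun p ⟨hpS, hpT⟩ => lt_asymm (α := ℝ) (hS' hpS) (hT' hpT)

lemma convexHull_unitHeightTrapezoid {p₀ p₁ q₀ q₁ : ℝ} (hp : p₀ ≤ p₁) (hq : q₀ ≤ q₁) :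
    convexHull ℝ {(p₀, 0), (p₁, 0), (q₁, 1), (q₀, 1)} = {z : ℝ × ℝ | 0 ≤ z.2 ∧ z.2 ≤ 1 ∧
      (1 - z.2) * p₀ + z.2 * q₀ ≤ z.1 ∧ z.1 ≤ (1 - z.2) * p₁ + z.2 * q₁} := by
  apply Subset.antisymm
  · refine convexHull_min ?_ ?_
    · rintro z (rfl | rfl | rfl | rfl) <;> simp [hp, hq]
    · rintro ⟨x, y⟩ ⟨hy₀, hy₁, hl, hr⟩ ⟨x', y'⟩ ⟨hy₀', hy₁', hl', hr'⟩ s t hs ht hst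
      obtain rfl : s = 1 - t := by linarith
      simp only [Prod.smul_mk, Prod.mk_add_mk, smul_eq_mul, mem_ofPred_eq] at *
      refine ⟨by positivity, by nlinarith, ?_, ?_⟩
      · nlinarith [mul_le_mul_of_nonneg_left hl hs, mul_le_mul_of_nonneg_left hl' ht]
      · nlinarith [mul_le_mul_of_nonneg_left hr hs, mul_le_mul_of_nonneg_left hr' ht]
  · rintro ⟨x, y⟩ ⟨hy₀, hy₁, hl, hr⟩
    dsimp only at hy₀ hy₁ hl hr
    set L := (1 - y) * p₀ + y * q₀
    set R := (1 - y) * p₁ + y * q₁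
    obtain ⟨t, ht₀, ht₁, hx⟩ : ∃ t : ℝ, 0 ≤ t ∧ t ≤ 1 ∧ x = L + t * (R - L) := by
      rcases (hl.trans hr).eq_or_lt with h | h
      · exact ⟨0, le_rfl, zero_le_one, by linarith⟩
      · refine ⟨(x - L) / (R - L), div_nonneg (by linarith) (by linarith),
          div_le_one_of_le₀ (by linarith) (by linarith), ?_⟩
        rw [div_mul_cancel₀ _ (sub_pos.2 h).ne']
        ring
    set V : Set (ℝ × ℝ) := {(p₀, 0), (p₁, 0), (q₁, 1), (q₀, 1)}
    have hbot : ((1 - t) * p₀ + t * p₁, (0 : ℝ)) ∈ convexHull ℝ V :=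
      segment_subset_convexHull (x := (p₀, 0)) (y := (p₁, 0)) (by simp [V]) (by simp [V])
        ⟨1 - t, t, by linarith, ht₀, by ring, by simp⟩
    have htop : ((1 - t) * q₀ + t * q₁, (1 : ℝ)) ∈ convexHull ℝ V :=
      segment_subset_convexHull (x := (q₀, 1)) (y := (q₁, 1)) (by simp [V]) (by simp [V])
        ⟨1 - t, t, by linarith, ht₀, by ring, by simp⟩
    refine (convex_convexHull ℝ V).segment_subset hbot htop
      ⟨1 - y, y, by linarith, hy₀, by ring, ?_⟩
    simp only [Prod.smul_mk, Prod.mk_add_mk, smul_eq_mul, Prod.mk.injEq, hx, L, R]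
    constructor <;> ring

lemma stdTrap_eq {a : ℝ} (ha : 1 ≤ a) :
    stdTrap a = {p : ℝ × ℝ | 0 ≤ p.2 ∧ p.2 ≤ 1 ∧ p.2 ≤ p.1 ∧ p.1 + p.2 ≤ a + 1} := by
  rw [stdTrap, convexHull_unitHeightTrapezoid (by linarith) ha]
  ext p
  simp only [mem_ofPred_eq]
  constructor <;> rintro ⟨h₁, h₂, h₃, h₄⟩ <;> exact ⟨h₁, h₂, by linarith, by linarith⟩

lemma stdPar_eq {a : ℝ} (ha : 0 ≤ a) :
    stdPar a = {p : ℝ × ℝ | 0 ≤ p.2 ∧ p.2 ≤ 1 ∧ p.2 ≤ p.1 ∧ p.1 ≤ p.2 + a} := by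
  rw [stdPar, convexHull_unitHeightTrapezoid ha (by linarith)]
  ext p
  simp only [mem_ofPred_eq]
  constructor <;> rintro ⟨h₁, h₂, h₃, h₄⟩ <;> exact ⟨h₁, h₂, by linarith, by linarith⟩

lemma homothety_stdTrap {r : ℝ} (hr : 0 < r) (v : ℝ × ℝ) {a : ℝ} (ha : 1 ≤ a) :
    homothety r v (stdTrap a) = {p : ℝ × ℝ | v.2 ≤ p.2 ∧ p.2 ≤ v.2 + r ∧
      p.2 - v.2 ≤ p.1 - v.1 ∧ p.1 - v.1 + (p.2 - v.2) ≤ r * (a + 1)} := by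
  ext p
  obtain ⟨q, rfl⟩ : ∃ q, p = r • q + v :=
    ⟨r⁻¹ • (p - v), by rw [smul_smul, mul_inv_cancel₀ hr.ne', one_smul, sub_add_cancel]⟩
  rw [mem_homothety_iff hr.ne', add_sub_cancel_right, inv_smul_smul₀ hr.ne', stdTrap_eq ha]
  simp only [mem_ofPred_eq, Prod.fst_add, Prod.snd_add, Prod.smul_fst, Prod.smul_snd,
    smul_eq_mul, add_sub_cancel_right]
  constructor
  · rintro ⟨h₁, h₂, h₃, h₄⟩
    exact ⟨by nlinarith, by nlinarith, by nlinarith, by nlinarith⟩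
  · rintro ⟨h₁, h₂, h₃, h₄⟩
    exact ⟨by nlinarith, by nlinarith, by nlinarith, by nlinarith⟩

lemma stdTrap_add_eq_union {a b : ℝ} (ha : 0 ≤ a) (hb : 1 ≤ b) :
    stdTrap (a + b) = stdPar a ∪ homothety 1 (a, 0) (stdTrap b) := by
  rw [stdTrap_eq (by linarith), stdPar_eq ha, homothety_stdTrap one_pos _ hb]
  ext ⟨x, y⟩
  simp only [mem_ofPred_eq, mem_union, sub_zero]
  constructor
  · rintro ⟨h₁, h₂, h₃, h₄⟩
    rcases le_total x (y + a) with h | h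
    · exact Or.inl ⟨h₁, h₂, h₃, h⟩
    · exact Or.inr ⟨h₁, by linarith, by linarith, by linarith⟩
  · rintro (⟨h₁, h₂, h₃, h₄⟩ | ⟨h₁, h₂, h₃, h₄⟩)
    · exact ⟨h₁, h₂, h₃, by linarith⟩
    · exact ⟨h₁, by linarith, by linarith, by linarith⟩

lemma stdTrap_mul_add_one_div_add_eq_union {a b : ℝ} (ha : 1 < a) (hb : 1 ≤ b) :
    stdTrap ((a * b + 1) / (a + b)) =
      homothety ((b + 1) / (a + b)) 0 (stdTrap a) ∪
        homothety (1 - (b + 1) / (a + b)) ((b + 1) / (a + b), (b + 1) / (a + b)) (stdTrap b) := by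
  have hab : 0 < a + b := by linarith
  set h := (b + 1) / (a + b)
  have hh₀ : 0 < h := by positivity
  have hh₁ : h < 1 := (div_lt_one hab).2 (by linarith)
  -- both pieces share the slanted right side `x + y = (ab + 1)/(a + b) + 1` of the whole
  have hbot : h * (a + 1) = (a * b + 1) / (a + b) + 1 := by
    simp only [h]; field_simp; ring
  have htop : 2 * h + (1 - h) * (b + 1) = (a * b + 1) / (a + b) + 1 := by
    simp only [h]; field_simp; ring
  rw [stdTrap_eq ((one_le_div hab).2 (by nlinarith)), homothety_stdTrap hh₀ _ ha.le,
    homothety_stdTrap (sub_pos.2 hh₁) _ hb]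
  ext ⟨x, y⟩
  simp only [mem_ofPred_eq, mem_union, Prod.fst_zero, Prod.snd_zero, sub_zero, zero_add]
  constructor
  · rintro ⟨h₁, h₂, h₃, h₄⟩
    rcases le_total y h with hy | hy
    · exact Or.inl ⟨h₁, hy, h₃, by linarith⟩
    · exact Or.inr ⟨hy, by linarith, by linarith, by linarith⟩
  · rintro (⟨h₁, h₂, h₃, h₄⟩ | ⟨h₁, h₂, h₃, h₄⟩)
    · exact ⟨h₁, by linarith, h₃, by linarith⟩
    · exact ⟨by linarith, by linarith, by linarith, by linarith⟩

lemma isOpenMap_fst_sub_snd : IsOpenMap fun p : ℝ × ℝ => p.1 - p.2 :=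
  (LinearMap.fst ℝ ℝ ℝ - LinearMap.snd ℝ ℝ ℝ).isOpenMap_of_finiteDimensional
    fun x => ⟨(x, 0), by simp⟩

section

variable {F : Set (Set (ℝ × ℝ))} {a b : ℝ}

lemma IsTiling.stdTrap_add (hpa : IsTiling (stdPar a) F) (htb : IsTiling (stdTrap b) F)
    (ha : 0 ≤ a) (hb : 1 ≤ b) : IsTiling (stdTrap (a + b)) F := by
  rw [stdTrap_add_eq_union ha hb]
  refine hpa.union (htb.homothetic one_pos _)
    (interior_inter_interior_eq_empty_of_separated (by fun_prop) isOpenMap_fst_sub_snd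
      (c := a) ?_ ?_)
  · rw [stdPar_eq ha]
    rintro p ⟨-, -, -, h⟩
    simp only [mem_preimage, mem_Iic]
    linarith
  · rw [homothety_stdTrap one_pos _ hb]
    rintro p ⟨-, -, h, -⟩
    simp only [mem_preimage, mem_Ici, sub_zero] at h ⊢
    linarith

lemma IsTiling.stdTrap_mul_add_one_div_add (hta : IsTiling (stdTrap a) F)
    (htb : IsTiling (stdTrap b) F) (ha : 1 < a) (hb : 1 ≤ b) :
    IsTiling (stdTrap ((a * b + 1) / (a + b))) F := by
  have hab : 0 < a + b := by linarith
  have hh₀ : 0 < (b + 1) / (a + b) := by positivity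
  have hh₁ : (b + 1) / (a + b) < 1 := (div_lt_one hab).2 (by linarith)
  rw [stdTrap_mul_add_one_div_add_eq_union ha hb]
  refine (hta.homothetic hh₀ _).union (htb.homothetic (sub_pos.2 hh₁) _)
    (interior_inter_interior_eq_empty_of_separated continuous_snd isOpenMap_snd
      (c := (b + 1) / (a + b)) ?_ ?_)
  · rw [homothety_stdTrap hh₀ _ ha.le]
    rintro p ⟨-, h, -, -⟩
    simpa using h
  · rw [homothety_stdTrap (sub_pos.2 hh₁) _ hb]
    rintro p ⟨h, -, -, -⟩
    exact h

end

theorem statement9_general (α : Set ℝ) :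
    (∀ a ∈ Pset α, ∀ b ∈ Tset α, a + b ∈ Tset α) ∧
    (∀ a ∈ Tset α, ∀ b ∈ Tset α, (a * b + 1) / (a + b) ∈ Tset α) := by
  constructor
  · rintro a ⟨ha, hta⟩ b ⟨hb, htb⟩
    exact ⟨by linarith, hta.stdTrap_add htb ha.le hb.le⟩
  · rintro a ⟨ha, hta⟩ b ⟨hb, htb⟩
    have hab : 0 < a + b := by linarith
    exact ⟨(one_lt_div hab).2 (by nlinarith), hta.stdTrap_mul_add_one_div_add htb ha hb.le⟩

/-- **Properties 4) and 5) of the sets `T(α)` and `P(α)`.** -/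
theorem statement9 (α : Set ℝ) (hα : ∀ x ∈ α, 1 < x) :
    (∀ a ∈ Pset α, ∀ b ∈ Tset α, a + b ∈ Tset α) ∧
    (∀ a ∈ Tset α, ∀ b ∈ Tset α, (a * b + 1) / (a + b) ∈ Tset α) :=
  statement9_general α
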